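/- Let N be an odd positive integer divisible by at least two distinct primes, and let f : ℤ/Nℤ → ℤ/Nℤ be any function such that x² = f(x)² for all x and x² = y² implies f(x) = f(y) (a canonical form for the relation x² ≡ y² mod N). Then for a uniformly random unit x ∈ (ℤ/Nℤ)*, the probability that f(x) ≢ ±x (mod N) is at least 1/2. -/
import Mathlib

lemma aux_exists_u' (a b : ℕ) (ha : 2 < a) (hb : 2 < b) (hco : Nat.Coprime a b) :
    ∃ u : ZMod (a * b), u * u = 1 ∧ u ≠ 1 ∧ u ≠ -1 := by
  haveI : Fact (2 < a) := ⟨ha⟩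
  haveI : Fact (2 < b) := ⟨hb⟩
  let e := ZMod.chineseRemainder hco
  refine ⟨e.symm (1, -1), ?_, ?_, ?_⟩
  · have : ((1, -1) : ZMod a × ZMod b) * (1, -1) = 1 := by
      ext <;> simp
    rw [← map_mul, this, map_one]
  · intro h
    have := congrArg e h
    simp only [RingEquiv.apply_symm_apply, map_one] at this
    have h2 : (-1 : ZMod b) = 1 := congrArg Prod.snd this
    exact ZMod.neg_one_ne_one h2
  · intro h
    have := congrArg e h
    simp only [RingEquiv.apply_symm_apply, map_neg, map_one] at this
    have h2 : (1 : ZMod a) = -1 := congrArg Prod.fst this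
    exact ZMod.neg_one_ne_one h2.symm

lemma aux_exists_u (N : ℕ) (hodd : Odd N)
    (hpq : ∃ p q : ℕ, p.Prime ∧ q.Prime ∧ p ≠ q ∧ p ∣ N ∧ q ∣ N) :
    ∃ u : ZMod N, u * u = 1 ∧ u ≠ 1 ∧ u ≠ -1 := by
  obtain ⟨p, q, hp, hq, hne, hpN, hqN⟩ := hpq
  have hN0 : N ≠ 0 := by rintro rfl; simp [Nat.odd_iff] at hodd
  obtain ⟨a, b, ha, hb, hco, hab⟩ :
      ∃ a b : ℕ, 2 < a ∧ 2 < b ∧ Nat.Coprime a b ∧ a * b = N := by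
    have hpodd : Odd p := hodd.of_dvd_nat hpN
    have hqodd : Odd q := hodd.of_dvd_nat hqN
    have hp3 : 3 ≤ p := by
      have h2 := hp.two_le
      have : p ≠ 2 := by rintro rfl; simp [Nat.odd_iff] at hpodd
      omega
    have hq3 : 3 ≤ q := by
      have h2 := hq.two_le
      have : q ≠ 2 := by rintro rfl; simp [Nat.odd_iff] at hqodd
      omega
    have hk0 : N.factorization p ≠ 0 := by
      have := Nat.Prime.factorization_pos_of_dvd hp hN0 hpN
      omega
    refine ⟨p ^ N.factorization p, N / p ^ N.factorization p, ?_, ?_, ?_, ?_⟩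
    · calc 2 < p := hp3
        _ ≤ p ^ N.factorization p := Nat.le_self_pow hk0 p
    · have hb0 : N / p ^ N.factorization p ≠ 0 := by
        intro h
        have := Nat.ordProj_mul_ordCompl_eq_self N p
        rw [h, mul_zero] at this
        exact hN0 this.symm
      have hqb : q ∣ N / p ^ N.factorization p := by
        have hqa : Nat.Coprime q (p ^ N.factorization p) :=
          Nat.Coprime.pow_right _ ((Nat.coprime_primes hq hp).mpr hne.symm)
        have hd : q ∣ p ^ N.factorization p * (N / p ^ N.factorization p) :=
          (Nat.ordProj_mul_ordCompl_eq_self N p).symm ▸ hqN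
        exact Nat.Coprime.dvd_of_dvd_mul_left hqa hd
      have := Nat.le_of_dvd (Nat.pos_of_ne_zero hb0) hqb
      omega
    · exact Nat.Coprime.pow_left _ (Nat.coprime_ordCompl hp hN0)
    · exact Nat.ordProj_mul_ordCompl_eq_self N p
  rw [← hab]
  exact aux_exists_u' a b ha hb hco

theorem stmt_12 (N : ℕ) (hodd : Odd N)
    (hpq : ∃ p q : ℕ, p.Prime ∧ q.Prime ∧ p ≠ q ∧ p ∣ N ∧ q ∣ N)
    (f : ZMod N → ZMod N)
    (hcf1 : ∀ x : ZMod N, x ^ 2 = (f x) ^ 2)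
    (hcf2 : ∀ x y : ZMod N, x ^ 2 = y ^ 2 → f x = f y) :
    Nat.card (ZMod N)ˣ ≤
      2 * Nat.card {x : (ZMod N)ˣ | f (x : ZMod N) ≠ (x : ZMod N) ∧
        f (x : ZMod N) ≠ -(x : ZMod N)} := by
  have hN0 : N ≠ 0 := by rintro rfl; simp [Nat.odd_iff] at hodd
  haveI : NeZero N := ⟨hN0⟩
  obtain ⟨u, huu, hu1, hum1⟩ := aux_exists_u N hodd hpq
  let U : (ZMod N)ˣ := ⟨u, u, huu, huu⟩
  set S : Set (ZMod N)ˣ := {x : (ZMod N)ˣ | f (x : ZMod N) ≠ (x : ZMod N) ∧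
        f (x : ZMod N) ≠ -(x : ZMod N)} with hS
  have key : Set.MapsTo (fun x => U * x) Sᶜ S := by
    intro x hx
    simp only [Set.mem_compl_iff, hS, Set.mem_setOf_eq, not_and_or, not_not] at hx
    have hsq : ((U * x : (ZMod N)ˣ) : ZMod N) ^ 2 = (x : ZMod N) ^ 2 := by
      push_cast
      have : (u * (x : ZMod N)) ^ 2 = (u * u) * (x : ZMod N) ^ 2 := by ring
      rw [this, huu, one_mul]
    have hf : f ((U * x : (ZMod N)ˣ) : ZMod N) = f (x : ZMod N) := hcf2 _ _ hsq
    have hxu : IsUnit ((x : ZMod N)) := x.isUnit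
    have hcoe : ((U * x : (ZMod N)ˣ) : ZMod N) = u * (x : ZMod N) := rfl
    constructor
    · intro h
      rw [hf, hcoe] at h
      rcases hx with h' | h'
      · rw [h'] at h
        -- x = u * x
        have : (1 : ZMod N) * (x : ZMod N) = u * (x : ZMod N) := by rw [one_mul]; exact h
        exact hu1 (hxu.mul_right_cancel this).symm
      · rw [h'] at h
        have : (-1 : ZMod N) * (x : ZMod N) = u * (x : ZMod N) := by
          rw [neg_one_mul]; exact h
        exact hum1 (hxu.mul_right_cancel this).symm
    · intro h
      rw [hf, hcoe] at h
      rcases hx with h' | h'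
      · rw [h'] at h
        have : (-1 : ZMod N) * (x : ZMod N) = u * (x : ZMod N) := by
          rw [neg_one_mul]; exact neg_eq_iff_eq_neg.mpr h
        exact hum1 (hxu.mul_right_cancel this).symm
      · rw [h'] at h
        have : (1 : ZMod N) * (x : ZMod N) = u * (x : ZMod N) := by
          rw [one_mul]; exact neg_injective h
        exact hu1 (hxu.mul_right_cancel this).symm
  have hinj : Set.InjOn (fun x => U * x) Sᶜ := fun x _ y _ h => by
    simpa using mul_left_cancel (a := U) h
  have hle : Sᶜ.ncard ≤ S.ncard :=
    Set.ncard_le_ncard_of_injOn _ key hinj (Set.toFinite S)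
  have htot : S.ncard + Sᶜ.ncard = Nat.card (ZMod N)ˣ := Set.ncard_add_ncard_compl S
  rw [Nat.card_coe_set_eq]
  omega
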